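/- The expected linear (straight-line) distance from a uniformly random point in the unit disk to the boundary, in a uniformly random direction, equals 8/(3π). -/

import Mathlib

/-!
A reflection of the plane maps any unit vector to any other and preserves the disk, Lebesgue
measure and exit distances, so the inner integral does not depend on the direction. For the
vertical direction the exit distance from `(a, b)` is `√(1 - a²) - b`; integrating it over
the chord `|b| < √(1 - a²)` gives `2 (1 - a²)`, and `∫₋₁¹ 2 (1 - a²) da = 8/3`. The double
integral is therefore `2π · 8/3`, which is `8/(3π)` times the measure `2π · π` of
directions × disk.
-/

open Metric Set MeasureTheory Real
open scoped InnerProductSpace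

section ExitDistance

variable {E F : Type*} [NormedAddCommGroup E] [NormedSpace ℝ E]
  [NormedAddCommGroup F] [NormedSpace ℝ F]

noncomputable def exitDistance (S : Set E) (x v : E) : ℝ :=
  sInf {t : ℝ | 0 ≤ t ∧ x + t • v ∉ interior S}

theorem exitDistance_preimage (e : E ≃L[ℝ] F) (S : Set F) (x v : E) :
    exitDistance (e ⁻¹' S) x v = exitDistance S (e x) (e v) := by
  have hinterior : interior (e ⁻¹' S) = e ⁻¹' interior S :=
    (e.toHomeomorph.preimage_interior S).symm
  simp only [exitDistance, hinterior, mem_preimage, map_add, map_smul]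

end ExitDistance

section InnerProductSpace

variable {E : Type*} [NormedAddCommGroup E] [InnerProductSpace ℝ E]

theorem exitDistance_closedBall {x v : E} {r : ℝ} (hv : ‖v‖ = 1) (hx : ‖x‖ < r) :
    exitDistance (closedBall 0 r) x v = √(⟪x, v⟫_ℝ ^ 2 + r ^ 2 - ‖x‖ ^ 2) - ⟪x, v⟫_ℝ := by
  set a := ⟪x, v⟫_ℝ
  set s := √(a ^ 2 + r ^ 2 - ‖x‖ ^ 2)
  have hr : 0 < r := (norm_nonneg x).trans_lt hx
  have hs : s ^ 2 = a ^ 2 + r ^ 2 - ‖x‖ ^ 2 := Real.sq_sqrt (by nlinarith [norm_nonneg x])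
  have has : |a| < s := abs_lt_of_sq_lt_sq (by nlinarith [norm_nonneg x]) (Real.sqrt_nonneg _)
  have hnorm (t : ℝ) : ‖x + t • v‖ ^ 2 = ‖x‖ ^ 2 + 2 * t * a + t ^ 2 := by
    rw [norm_add_sq_real, norm_smul, inner_smul_right, Real.norm_eq_abs, mul_pow, sq_abs, hv]
    ring
  have hexit : {t | 0 ≤ t ∧ x + t • v ∉ interior (closedBall 0 r)} = Ici (s - a) := by
    ext t
    simp only [interior_closedBall _ hr.ne', mem_ball_zero_iff, not_lt, mem_ofPred_eq, mem_Ici,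
      ← sq_le_sq₀ hr.le (norm_nonneg _), hnorm]
    obtain ⟨has₁, has₂⟩ := abs_lt.1 has
    constructor
    · rintro ⟨ht, h⟩
      nlinarith
    · intro h
      exact ⟨by linarith, by nlinarith⟩
  rw [exitDistance, hexit, csInf_Ici]

variable [FiniteDimensional ℝ E] [MeasurableSpace E] [BorelSpace E]

theorem lintegral_exitDistance_closedBall_eq_of_norm_eq {u v : E} (huv : ‖u‖ = ‖v‖) (r : ℝ) :
    ∫⁻ x in closedBall 0 r, ENNReal.ofReal (exitDistance (closedBall 0 r) x u) =
      ∫⁻ x in closedBall 0 r, ENNReal.ofReal (exitDistance (closedBall 0 r) x v) := by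
  set R := Submodule.reflection (ℝ ∙ (u - v))ᗮ
  have hR : R ⁻¹' closedBall 0 r = closedBall 0 r := by
    rw [R.preimage_closedBall, map_zero]
  have hRu : R u = v := Submodule.reflection_sub huv
  have hexit (x : E) :
      exitDistance (closedBall 0 r) (R x) v = exitDistance (closedBall 0 r) x u := by
    simpa [hR, hRu] using
      (exitDistance_preimage R.toContinuousLinearEquiv (closedBall 0 r) x u).symm
  simpa only [hexit, hR] using R.measurePreserving.setLIntegral_comp_preimage_emb
    R.toHomeomorph.toMeasurableEquiv.measurableEmbedding
    (fun y => ENNReal.ofReal (exitDistance (closedBall 0 r) y v)) (closedBall 0 r)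

end InnerProductSpace

theorem ball_ae_eq_closedBall {E : Type*} [NormedAddCommGroup E] [NormedSpace ℝ E] [Nontrivial E]
    [MeasurableSpace E] [BorelSpace E] [FiniteDimensional ℝ E] (μ : Measure E)
    [μ.IsAddHaarMeasure] (x : E) (r : ℝ) : ball x r =ᵐ[μ] closedBall x r :=
  ae_eq_of_subset_of_measure_ge ball_subset_closedBall
    (Measure.addHaar_closedBall_eq_addHaar_ball μ x r).le measurableSet_ball.nullMeasurableSet
    measure_closedBall_lt_top.ne

theorem setLIntegral_Ioo_ofReal_eq_intervalIntegral {f : ℝ → ℝ} {a b : ℝ} (hab : a ≤ b)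
    (hf : ContinuousOn f (Icc a b)) (hf₀ : ∀ x ∈ Ioo a b, 0 ≤ f x) :
    ∫⁻ x in Ioo a b, ENNReal.ofReal (f x) = ENNReal.ofReal (∫ x in a..b, f x) := by
  rw [intervalIntegral.integral_of_le hab, integral_Ioc_eq_integral_Ioo,
    ofReal_integral_eq_lintegral_ofReal (hf.integrableOn_Icc.mono_set Ioo_subset_Icc_self)
      ((ae_restrict_iff' measurableSet_Ioo).2 (.of_forall hf₀))]

theorem setLIntegral_Ioo_neg_ofReal_sub {c : ℝ} (hc : 0 ≤ c) :
    ∫⁻ x in Ioo (-c) c, ENNReal.ofReal (c - x) = ENNReal.ofReal (2 * c ^ 2) := by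
  rw [setLIntegral_Ioo_ofReal_eq_intervalIntegral (by linarith) (by fun_prop)
    fun x hx => sub_nonneg.2 hx.2.le, intervalIntegral.integral_comp_sub_left (fun x => x),
    integral_id]
  ring_nf

section Plane

theorem norm_equiv_symm_cos_sin (θ : ℝ) :
    ‖(WithLp.equiv 2 (Fin 2 → ℝ)).symm ![cos θ, sin θ]‖ = 1 := by
  simp [EuclideanSpace.norm_eq, Fin.sum_univ_two]

theorem exitDistance_unitDisk_single_one {x : EuclideanSpace ℝ (Fin 2)} (hx : ‖x‖ < 1) :
    exitDistance (closedBall 0 1) x (EuclideanSpace.single 1 1) = √(1 - x 0 ^ 2) - x 1 := by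
  rw [exitDistance_closedBall (by simp) hx, EuclideanSpace.inner_single_right,
    EuclideanSpace.real_norm_sq_eq, Fin.sum_univ_two]
  simp only [one_mul, conj_trivial]
  ring_nf

theorem lintegral_indicator_unitDisk_sqrt_sub_slice (a : ℝ) :
    ∫⁻ b, {p : ℝ × ℝ | p.1 ^ 2 + p.2 ^ 2 < 1}.indicator
      (fun p => ENNReal.ofReal (√(1 - p.1 ^ 2) - p.2)) (a, b) =
      ENNReal.ofReal (2 - 2 * a ^ 2) := by
  have hslice : ∫⁻ b, {p : ℝ × ℝ | p.1 ^ 2 + p.2 ^ 2 < 1}.indicator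
      (fun p => ENNReal.ofReal (√(1 - p.1 ^ 2) - p.2)) (a, b) =
      ∫⁻ b in Ioo (-√(1 - a ^ 2)) √(1 - a ^ 2), ENNReal.ofReal (√(1 - a ^ 2) - b) := by
    rw [← lintegral_indicator measurableSet_Ioo]
    congr with b
    have hmem : a ^ 2 + b ^ 2 < 1 ↔ b ∈ Ioo (-√(1 - a ^ 2)) √(1 - a ^ 2) := by
      rw [mem_Ioo, ← abs_lt, Real.lt_sqrt (abs_nonneg b), sq_abs]
      constructor <;> intro h <;> linarith
    simp only [indicator_apply, mem_ofPred_eq, hmem]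
  rw [hslice, setLIntegral_Ioo_neg_ofReal_sub (Real.sqrt_nonneg _)]
  rcases le_or_gt (a ^ 2) 1 with ha | ha
  · rw [Real.sq_sqrt (by linarith)]
    ring_nf
  · rw [Real.sqrt_eq_zero'.2 (by linarith), ENNReal.ofReal_of_nonpos (by linarith),
      ENNReal.ofReal_of_nonpos (by linarith)]

theorem lintegral_ofReal_two_sub_two_mul_sq :
    ∫⁻ a : ℝ, ENNReal.ofReal (2 - 2 * a ^ 2) = ENNReal.ofReal (8 / 3) := by
  have hsupp : (fun a : ℝ => ENNReal.ofReal (2 - 2 * a ^ 2)).support ⊆ Ioo (-1) 1 := by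
    refine Function.support_subset_iff'.2 fun a ha => ENNReal.ofReal_of_nonpos ?_
    rw [mem_Ioo, ← abs_lt, ← sq_lt_one_iff_abs_lt_one] at ha
    linarith
  rw [← setLIntegral_eq_of_support_subset hsupp,
    setLIntegral_Ioo_ofReal_eq_intervalIntegral (by norm_num) (by fun_prop)
      fun a ha => by nlinarith [ha.1, ha.2]]
  norm_num [intervalIntegral.integral_sub, intervalIntegral.integral_const_mul, integral_pow]

theorem lintegral_unitDisk_sqrt_sub :
    ∫⁻ p : ℝ × ℝ in {p | p.1 ^ 2 + p.2 ^ 2 < 1}, ENNReal.ofReal (√(1 - p.1 ^ 2) - p.2) =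
      ENNReal.ofReal (8 / 3) := by
  have hS : MeasurableSet {p : ℝ × ℝ | p.1 ^ 2 + p.2 ^ 2 < 1} :=
    (isOpen_lt (by fun_prop) continuous_const).measurableSet
  rw [← lintegral_indicator hS, Measure.volume_eq_prod,
    lintegral_prod _ (Measurable.indicator (by fun_prop) hS).aemeasurable]
  simp only [lintegral_indicator_unitDisk_sqrt_sub_slice, lintegral_ofReal_two_sub_two_mul_sq]

noncomputable def euclideanPlaneEquivProd : EuclideanSpace ℝ (Fin 2) ≃ᵐ ℝ × ℝ :=
  (MeasurableEquiv.toLp 2 (Fin 2 → ℝ)).symm.trans MeasurableEquiv.finTwoArrow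

theorem measurePreserving_euclideanPlaneEquivProd :
    MeasurePreserving euclideanPlaneEquivProd :=
  (volume_preserving_finTwoArrow ℝ).comp
    (EuclideanSpace.volume_preserving_symm_measurableEquiv_toLp (Fin 2))

theorem lintegral_exitDistance_unitDisk_single_one :
    ∫⁻ x in closedBall (0 : EuclideanSpace ℝ (Fin 2)) 1,
      ENNReal.ofReal (exitDistance (closedBall 0 1) x (EuclideanSpace.single 1 1)) =
      ENNReal.ofReal (8 / 3) := by
  have hball : ball (0 : EuclideanSpace ℝ (Fin 2)) 1 =
      euclideanPlaneEquivProd ⁻¹' {p | p.1 ^ 2 + p.2 ^ 2 < 1} := by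
    ext x
    simp [EuclideanSpace.norm_eq, Fin.sum_univ_two, euclideanPlaneEquivProd,
      Real.sqrt_lt' one_pos]
  rw [← setLIntegral_congr (ball_ae_eq_closedBall volume 0 1),
    setLIntegral_congr_fun measurableSet_ball
      fun x hx => by rw [exitDistance_unitDisk_single_one (mem_ball_zero_iff.1 hx)],
    hball, ← lintegral_unitDisk_sqrt_sub]
  exact measurePreserving_euclideanPlaneEquivProd.setLIntegral_comp_preimage_emb
    euclideanPlaneEquivProd.measurableEmbedding
    (fun p : ℝ × ℝ => ENNReal.ofReal (√(1 - p.1 ^ 2) - p.2)) {p | p.1 ^ 2 + p.2 ^ 2 < 1}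

end Plane

/-- The expected straight-line distance from a uniformly random point of the unit disk
to the boundary, in a uniformly random direction, equals `8/(3π)`: averaging the exit
distance `L x u` over the disk and over directions `u = (cos θ, sin θ)`, `θ ∈ [0, 2π)`. -/
theorem expected_linear_distance_unit_disk
    (D : Set (EuclideanSpace ℝ (Fin 2))) (hD : D = Metric.closedBall 0 1)
    (u : ℝ → EuclideanSpace ℝ (Fin 2))
    (hu : ∀ θ, u θ = (WithLp.equiv 2 (Fin 2 → ℝ)).symm ![Real.cos θ, Real.sin θ])
    (L : EuclideanSpace ℝ (Fin 2) → EuclideanSpace ℝ (Fin 2) → ℝ)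
    (hL : ∀ x v, L x v = sInf {t : ℝ | 0 ≤ t ∧ x + t • v ∉ interior D}) :
    ∫⁻ θ in Set.Ioo (0 : ℝ) (2 * Real.pi),
        (∫⁻ x in D, ENNReal.ofReal (L x (u θ))) =
      ENNReal.ofReal (8 / (3 * Real.pi)) * (ENNReal.ofReal (2 * Real.pi) * volume D) := by
  subst hD
  obtain rfl : L = exitDistance (closedBall 0 1) := funext fun x => funext (hL x)
  have hinner (θ : ℝ) :
      ∫⁻ x in closedBall 0 1, ENNReal.ofReal (exitDistance (closedBall 0 1) x (u θ)) =
        ENNReal.ofReal (8 / 3) := by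
    have hnorm : ‖u θ‖ = ‖EuclideanSpace.single (1 : Fin 2) (1 : ℝ)‖ := by
      rw [hu, norm_equiv_symm_cos_sin, PiLp.norm_single, norm_one]
    rw [lintegral_exitDistance_closedBall_eq_of_norm_eq hnorm,
      lintegral_exitDistance_unitDisk_single_one]
  rw [setLIntegral_congr_fun measurableSet_Ioo fun θ _ => hinner θ, setLIntegral_const,
    Real.volume_Ioo, sub_zero, EuclideanSpace.volume_closedBall_fin_two, ENNReal.ofReal_one,
    one_pow, one_mul,
    ← ENNReal.ofReal_mul (by positivity), ← ENNReal.ofReal_mul (by positivity),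
    ← ENNReal.ofReal_mul (by positivity)]
  congr 1
  field_simp
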